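/- For all nonnegative integers ℓ and ℓ' such that ℓ + ℓ' is odd, J(ℓ,ℓ') = 0. (This is the charge-conjugation selection rule: basis states of even and odd ℓ do not mix in two-dimensional large-N_c QCD.) -/

import Mathlib

open MeasureTheory Filter Set

/-- The Legendre polynomial `P_ℓ`, via the Rodrigues formula
`P_ℓ(w) = (1/(2^ℓ ℓ!)) (d/dw)^ℓ (w²−1)^ℓ`. -/
noncomputable def legendreP (ℓ : ℕ) (w : ℝ) : ℝ :=
  ((2 : ℝ) ^ ℓ * Nat.factorial ℓ)⁻¹ * iteratedDeriv ℓ (fun t : ℝ => (t ^ 2 - 1) ^ ℓ) w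

/-- `IsJ ℓ ℓ' v` asserts that the quantity
`J(ℓ,ℓ') = ∫₀¹ (PV ∫₀¹ P_ℓ(1−2x₁)(P_{ℓ'}(1−2x₁) − P_{ℓ'}(1−2x₂))/(x₁−x₂)² dx₂) dx₁`
is well defined and equals `v`: there is a function `g` such that for every
`x₁ ∈ (0,1)` the inner principal value (around `x₂ = x₁`) exists and equals
`g x₁`, `g` is integrable on `(0,1)`, and `∫₀¹ g = v`. -/
def IsJ (ℓ ℓ' : ℕ) (v : ℝ) : Prop :=
  ∃ g : ℝ → ℝ,
    (∀ x₁ ∈ Ioo (0 : ℝ) 1,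
      Tendsto (fun δ : ℝ =>
          ∫ x₂ in Ioo (0 : ℝ) 1 \ Ioo (x₁ - δ) (x₁ + δ),
            legendreP ℓ (1 - 2 * x₁) * (legendreP ℓ' (1 - 2 * x₁) - legendreP ℓ' (1 - 2 * x₂))
              / (x₁ - x₂) ^ 2)
        (nhdsWithin 0 (Ioi 0)) (nhds (g x₁))) ∧
    IntegrableOn g (Ioo (0 : ℝ) 1) ∧
    ∫ x₁ in Ioo (0 : ℝ) 1, g x₁ = v

/-!
Under the reflection `x ↦ 1 - x` the two Legendre factors pick up the signs `(-1)^ℓ` and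
`(-1)^ℓ'`, and the excised domain `(0,1) \ (x - δ, x + δ)` is carried to the one around `1 - x`.
Hence the inner principal value `g` satisfies `g (1 - x) = -g x` when `ℓ + ℓ'` is odd, and its
integral over `(0,1)` vanishes.

The work lies in showing that `g` exists and is integrable. Writing
`q(y) = q(x) + q'(x) (y - x) + (y - x)² W(x, y)` with `W = q.taylorQuotient` polynomial, the
excised integral is `q'(x) ∫ dy / (x - y)`, which equals `log x - log (1 - x)` for every small
`δ` because the excision is symmetric, minus the absolutely convergent integral of `W(x, ·)`.
-/

open Polynomial Topology

namespace Polynomial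

variable {K : Type*} [CommRing K]

noncomputable def taylorQuotient (p : K[X]) (a b : K) : K :=
  ∑ k ∈ Finset.range (p.natDegree + 1), (hasseDeriv (k + 2) p).eval a * (b - a) ^ k

theorem eval_sub_eval_sub_derivative_mul (p : K[X]) (a b : K) :
    p.eval b - p.eval a - p.derivative.eval a * (b - a) = (b - a) ^ 2 * p.taylorQuotient a b := by
  have h := eval_eq_sum_range' (p := taylor a p) (n := p.natDegree + 3)
    (by rw [natDegree_taylor]; omega) (b - a)
  rw [taylor_eval, sub_add_cancel, Finset.sum_range_succ', Finset.sum_range_succ',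
    taylor_coeff_zero, taylor_coeff_one] at h
  simp only [taylor_coeff] at h
  rw [h, zero_add, pow_one, pow_zero, mul_one, add_sub_cancel_right, add_sub_cancel_right,
    taylorQuotient, Finset.mul_sum]
  exact Finset.sum_congr rfl fun k _ => by ring

theorem continuous_taylorQuotient [TopologicalSpace K] [IsTopologicalRing K] (p : K[X]) :
    Continuous fun z : K × K => p.taylorQuotient z.1 z.2 := by
  unfold taylorQuotient
  fun_prop

theorem eval_sub_eval_div_sub_sq {F : Type*} [Field F] (p : F[X]) {x y : F} (hxy : x ≠ y) :
    (p.eval x - p.eval y) / (x - y) ^ 2 =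
      p.derivative.eval x * (x - y)⁻¹ - p.taylorQuotient x y := by
  have h := p.eval_sub_eval_sub_derivative_mul x y
  have hxy' : x - y ≠ 0 := sub_ne_zero.mpr hxy
  field_simp
  linear_combination -h

theorem iteratedDeriv_eval {𝕜 : Type*} [NontriviallyNormedField 𝕜] (p : 𝕜[X]) (n : ℕ) :
    iteratedDeriv n (fun t => p.eval t) = fun t => (derivative^[n] p).eval t := by
  induction n with
  | zero => simp
  | succ n ih =>
    rw [iteratedDeriv_succ, ih, Function.iterate_succ_apply']
    ext t
    exact Polynomial.deriv (p := derivative^[n] p)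

end Polynomial

theorem setIntegral_preimage_const_sub {E : Type*} [NormedAddCommGroup E] [NormedSpace ℝ E]
    (c : ℝ) (f : ℝ → E) (s : Set ℝ) :
    ∫ y in (fun y => c - y) ⁻¹' s, f (c - y) = ∫ y in s, f y :=
  (Measure.measurePreserving_sub_left volume c).setIntegral_preimage_emb
    (MeasurableEquiv.subLeft c).measurableEmbedding f s

theorem integral_Ioo_eq_zero_of_one_sub {g : ℝ → ℝ}
    (hg : ∀ x ∈ Ioo (0 : ℝ) 1, g (1 - x) = -g x) :
    ∫ x in Ioo (0 : ℝ) 1, g x = 0 := by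
  have hreflect := setIntegral_preimage_const_sub 1 g (Ioo 0 1)
  rw [preimage_const_sub_Ioo, sub_zero, sub_self, setIntegral_congr_fun measurableSet_Ioo hg,
    integral_neg] at hreflect
  linarith

theorem tendsto_setIntegral_diff_Ioo {E : Type*} [NormedAddCommGroup E] [NormedSpace ℝ E]
    {f : ℝ → E} {s : Set ℝ} (hf : IntegrableOn f s) (x : ℝ) :
    Tendsto (fun δ => ∫ y in s \ Ioo (x - δ) (x + δ), f y) (𝓝[>] 0) (𝓝 (∫ y in s, f y)) := by
  have hvol : Tendsto (fun δ => volume.restrict s (Ioo (x - δ) (x + δ))) (𝓝[>] 0) (𝓝 0) := by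
    have hlen : Tendsto (fun δ : ℝ => ENNReal.ofReal (x + δ - (x - δ))) (𝓝[>] 0) (𝓝 0) := by
      have h := ((continuous_const_add x).sub (continuous_sub_left x)).tendsto 0
      simpa using ENNReal.tendsto_ofReal (h.mono_left nhdsWithin_le_nhds)
    refine tendsto_of_tendsto_of_tendsto_of_le_of_le tendsto_const_nhds hlen (fun _ => zero_le)
      fun δ => ?_
    exact (Measure.restrict_apply_le _ _).trans Real.volume_Ioo.le
  have hsmall := hf.tendsto_setIntegral_nhds_zero hvol
  simp_rw [Measure.restrict_restrict measurableSet_Ioo] at hsmall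
  have hsplit : ∀ δ, ∫ y in s \ Ioo (x - δ) (x + δ), f y
      = (∫ y in s, f y) - ∫ y in Ioo (x - δ) (x + δ) ∩ s, f y := fun δ => by
    rw [Set.sdiff_eq_compl_inter, ← Measure.restrict_restrict measurableSet_Ioo.compl,
      setIntegral_compl measurableSet_Ioo hf, Measure.restrict_restrict measurableSet_Ioo]
  simp_rw [hsplit]
  simpa using tendsto_const_nhds.sub hsmall

section Excision

variable {x δ : ℝ}

theorem Ioo_diff_Ioo_eq_union (hδ : 0 < δ) (hδx : δ < x) (hδ1 : δ < 1 - x) :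
    Ioo (0 : ℝ) 1 \ Ioo (x - δ) (x + δ) = Ioc 0 (x - δ) ∪ Ico (x + δ) 1 := by
  ext y
  simp only [Set.mem_sdiff, mem_Ioo, mem_union, mem_Ioc, mem_Ico]
  constructor
  · rintro ⟨⟨hy0, hy1⟩, hfar⟩
    rcases le_or_gt y (x - δ) with hle | hgt
    · exact Or.inl ⟨hy0, hle⟩
    · exact Or.inr ⟨not_lt.mp fun h => hfar ⟨hgt, h⟩, hy1⟩
  · rintro (⟨hy0, hy1⟩ | ⟨hy0, hy1⟩)
    · exact ⟨⟨hy0, by linarith⟩, fun h => by linarith [h.1]⟩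
    · exact ⟨⟨by linarith, hy1⟩, fun h => by linarith [h.2]⟩

theorem integrableOn_inv_sub_Ioo_diff_Ioo (hδ : 0 < δ) :
    IntegrableOn (fun y => (x - y)⁻¹) (Ioo (0 : ℝ) 1 \ Ioo (x - δ) (x + δ)) := by
  refine Measure.integrableOn_of_bounded (M := δ⁻¹)
    ((measure_mono sdiff_subset).trans_lt (by simp)).ne
    (measurable_const.sub measurable_id).inv.aestronglyMeasurable
    ((ae_restrict_iff' (measurableSet_Ioo.diff measurableSet_Ioo)).mpr (ae_of_all _ ?_))
  rintro y ⟨-, hy⟩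
  rw [norm_inv, Real.norm_eq_abs]
  refine inv_anti₀ hδ ?_
  rw [mem_Ioo, not_and_or, not_lt, not_lt] at hy
  rcases hy with hy | hy
  · exact le_abs.mpr (Or.inl (by linarith))
  · exact le_abs.mpr (Or.inr (by linarith))

theorem integral_inv_sub_Ioo_diff_Ioo (hδ : 0 < δ) (hδx : δ < x) (hδ1 : δ < 1 - x) :
    ∫ y in Ioo (0 : ℝ) 1 \ Ioo (x - δ) (x + δ), (x - y)⁻¹ = Real.log x - Real.log (1 - x) := by
  have hint := integrableOn_inv_sub_Ioo_diff_Ioo (x := x) hδ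
  rw [Ioo_diff_Ioo_eq_union hδ hδx hδ1] at hint ⊢
  rw [setIntegral_union (disjoint_left.mpr fun y hy hy' => by linarith [hy.2, hy'.1])
    measurableSet_Ico (hint.mono_set subset_union_left) (hint.mono_set subset_union_right),
    integral_Ico_eq_integral_Ioo, ← integral_Ioc_eq_integral_Ioo,
    ← intervalIntegral.integral_of_le (by linarith),
    ← intervalIntegral.integral_of_le (by linarith),
    intervalIntegral.integral_comp_sub_left (fun y => y⁻¹),
    intervalIntegral.integral_comp_sub_left (fun y => y⁻¹),
    integral_inv (notMem_uIcc_of_lt (by linarith) (by linarith)),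
    integral_inv (notMem_uIcc_of_gt (by linarith) (by linarith)),
    sub_zero, sub_sub_cancel, show (x - (x + δ)) / (x - 1) = δ / (1 - x) by
      rw [← neg_div_neg_eq]; congr 1 <;> ring,
    Real.log_div (by linarith) hδ.ne', Real.log_div hδ.ne' (by linarith)]
  ring

end Excision

noncomputable def excisedIntegral (P Q : ℝ → ℝ) (x δ : ℝ) : ℝ :=
  ∫ y in Ioo (0 : ℝ) 1 \ Ioo (x - δ) (x + δ), P x * (Q x - Q y) / (x - y) ^ 2

theorem excisedIntegral_one_sub {P Q : ℝ → ℝ} {a b : ℝ} (hP : ∀ x, P (1 - x) = a * P x)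
    (hQ : ∀ x, Q (1 - x) = b * Q x) (x δ : ℝ) :
    excisedIntegral P Q (1 - x) δ = a * b * excisedIntegral P Q x δ := by
  have hreflect := setIntegral_preimage_const_sub 1
    (fun y => P (1 - x) * (Q (1 - x) - Q y) / (1 - x - y) ^ 2)
    (Ioo 0 1 \ Ioo (1 - x - δ) (1 - x + δ))
  rw [preimage_sdiff, preimage_const_sub_Ioo, preimage_const_sub_Ioo, sub_zero, sub_self,
    show 1 - (1 - x + δ) = x - δ by ring, show 1 - (1 - x - δ) = x + δ by ring] at hreflect
  rw [excisedIntegral, excisedIntegral, ← hreflect, ← integral_const_mul]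
  refine setIntegral_congr_fun (measurableSet_Ioo.diff measurableSet_Ioo) fun y _ => ?_
  simp only [hP, hQ]
  ring

/-- The principal value `PV ∫₀¹ (p(x) - p(y))/(x - y)² dy` of a polynomial `p`. -/
noncomputable def pvInverseSquare (p : ℝ[X]) (x : ℝ) : ℝ :=
  p.derivative.eval x * (Real.log x - Real.log (1 - x)) -
    ∫ y in (0 : ℝ)..1, p.taylorQuotient x y

theorem tendsto_excisedIntegral (P : ℝ → ℝ) (p : ℝ[X]) {x : ℝ} (hx : x ∈ Ioo (0 : ℝ) 1) :
    Tendsto (excisedIntegral P (fun y => p.eval y) x) (𝓝[>] 0)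
      (𝓝 (P x * pvInverseSquare p x)) := by
  have hW : IntegrableOn (p.taylorQuotient x) (Ioo (0 : ℝ) 1) :=
    ((p.continuous_taylorQuotient.comp (Continuous.prodMk_right x)).integrableOn_Icc).mono_set
      Ioo_subset_Icc_self
  have hsplit : ∀ᶠ δ in 𝓝[>] 0, excisedIntegral P (fun y => p.eval y) x δ =
      P x * (p.derivative.eval x * (Real.log x - Real.log (1 - x)) -
        ∫ y in Ioo (0 : ℝ) 1 \ Ioo (x - δ) (x + δ), p.taylorQuotient x y) := by
    filter_upwards [Ioo_mem_nhdsGT (lt_min hx.1 (sub_pos.mpr hx.2))] with δ ⟨hδ, hδx⟩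
    rw [lt_min_iff] at hδx
    rw [excisedIntegral, ← integral_inv_sub_Ioo_diff_Ioo hδ hδx.1 hδx.2, ← integral_const_mul,
      ← integral_sub ((integrableOn_inv_sub_Ioo_diff_Ioo hδ).const_mul _)
        (hW.mono_set sdiff_subset),
      ← integral_const_mul]
    refine setIntegral_congr_fun (measurableSet_Ioo.diff measurableSet_Ioo) fun y hy => ?_
    have hxy : x ≠ y := fun h => hy.2 ⟨by linarith, by linarith⟩
    rw [mul_div_assoc, p.eval_sub_eval_div_sub_sq hxy]
  refine Tendsto.congr' (EventuallyEq.symm hsplit) ?_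
  rw [pvInverseSquare, intervalIntegral.integral_of_le zero_le_one, integral_Ioc_eq_integral_Ioo]
  exact (tendsto_const_nhds.sub (tendsto_setIntegral_diff_Ioo hW x)).const_mul _

theorem integrableOn_mul_pvInverseSquare {P : ℝ → ℝ} (hP : Continuous P) (p : ℝ[X]) :
    IntegrableOn (fun x => P x * pvInverseSquare p x) (Ioo (0 : ℝ) 1) := by
  have hlog : IntegrableOn (fun x => Real.log x - Real.log (1 - x)) (Ioo (0 : ℝ) 1) := by
    rw [← intervalIntegrable_iff_integrableOn_Ioo_of_le zero_le_one]
    refine intervalIntegral.intervalIntegrable_log'.sub ?_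
    simpa using
      (intervalIntegral.intervalIntegrable_log' (a := 0) (b := 1)).comp_sub_left 1 |>.symm
  have hsingular := hlog.continuousOn_mul_of_subset (hP.mul p.derivative.continuous).continuousOn
    isCompact_Icc measurableSet_Ioo Ioo_subset_Icc_self
  have hregular : IntegrableOn (fun x => P x * ∫ y in (0 : ℝ)..1, p.taylorQuotient x y)
      (Ioo (0 : ℝ) 1) :=
    ((hP.mul (intervalIntegral.continuous_parametric_intervalIntegral_of_continuous'
      p.continuous_taylorQuotient 0 1)).integrableOn_Icc).mono_set Ioo_subset_Icc_self
  refine (hsingular.sub hregular).congr_fun (fun x _ => ?_) measurableSet_Ioo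
  simp only [pvInverseSquare, Pi.sub_apply, Pi.mul_apply]
  ring

theorem exists_legendreP_one_sub_two_mul_eq_eval (n : ℕ) :
    ∃ p : ℝ[X], ∀ x, legendreP n (1 - 2 * x) = p.eval x := by
  refine ⟨(C ((2 : ℝ) ^ n * n.factorial)⁻¹ * derivative^[n] ((X ^ 2 - 1) ^ n)).comp (1 - 2 * X),
    fun x => ?_⟩
  have hpoly : (fun t : ℝ => (t ^ 2 - 1) ^ n) = fun t => ((X ^ 2 - 1) ^ n : ℝ[X]).eval t := by
    simp
  simp [legendreP, hpoly, iteratedDeriv_eval]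

theorem legendreP_neg (n : ℕ) (w : ℝ) : legendreP n (-w) = (-1) ^ n * legendreP n w := by
  have hrodrigues := iteratedDeriv_comp_neg n (fun t : ℝ => (t ^ 2 - 1) ^ n) (-w)
  simp only [neg_sq, neg_neg, smul_eq_mul] at hrodrigues
  rw [legendreP, legendreP, hrodrigues]
  ring

theorem legendreP_one_sub_two_mul_one_sub (n : ℕ) (x : ℝ) :
    legendreP n (1 - 2 * (1 - x)) = (-1) ^ n * legendreP n (1 - 2 * x) := by
  rw [← legendreP_neg]
  ring_nf

/-- Charge-conjugation selection rule: if `ℓ + ℓ'` is odd then `J(ℓ,ℓ') = 0`,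
so basis states of even and odd `ℓ` do not mix in 2D large-`N_c` QCD. -/
theorem J_selection_rule (ℓ ℓ' : ℕ) (h : Odd (ℓ + ℓ')) : IsJ ℓ ℓ' 0 := by
  obtain ⟨p, hp⟩ := exists_legendreP_one_sub_two_mul_eq_eval ℓ
  obtain ⟨q, hq⟩ := exists_legendreP_one_sub_two_mul_eq_eval ℓ'
  have hlim : ∀ x ∈ Ioo (0 : ℝ) 1, Tendsto (excisedIntegral (fun x => legendreP ℓ (1 - 2 * x))
      (fun x => legendreP ℓ' (1 - 2 * x)) x) (𝓝[>] 0)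
      (𝓝 (legendreP ℓ (1 - 2 * x) * pvInverseSquare q x)) := fun x hx => by
    simpa only [hq] using tendsto_excisedIntegral _ q hx
  refine ⟨_, hlim, integrableOn_mul_pvInverseSquare (by simpa only [hp] using p.continuous) q,
    integral_Ioo_eq_zero_of_one_sub fun x hx => tendsto_nhds_unique (hlim (1 - x) ?_) ?_⟩
  · exact ⟨sub_pos.mpr hx.2, sub_lt_self 1 hx.1⟩
  · have hreflect := excisedIntegral_one_sub (P := fun x => legendreP ℓ (1 - 2 * x))
      (Q := fun x => legendreP ℓ' (1 - 2 * x)) (legendreP_one_sub_two_mul_one_sub ℓ)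
      (legendreP_one_sub_two_mul_one_sub ℓ') x
    simp only [← pow_add, h.neg_one_pow, neg_one_mul] at hreflect
    rw [funext hreflect]
    exact (hlim x hx).neg
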